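/- arXiv:1902.08389 — 6 statements merged into one kernel-verified Lean document; each statement's English description precedes it below -/
import Mathlib

section
/- Let S be a finite subset of a (not necessarily associative) unital F-algebra A and n ≥ 1 an integer. If dim L_n(S) = dim L_{n+1}(S) = ... = dim L_{2n}(S), then dim L_{n+t}(S) = dim L_n(S) for all natural numbers t (i.e., the spans stabilize: L_m(S) = L_n(S) for all m ≥ n). -/
/-- Words in a finite subset `S` of a (not necessarily associative) unital algebra:
`IsWord S n a` means `a` is a product (with some bracketing) of `n` elements of `S`,
where `1` is the unique word of length `0`. -/
inductive IsWord {A : Type*} [NonAssocRing A] (S : Set A) : ℕ → A → Prop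
  | one : IsWord S 0 1
  | base : ∀ a, a ∈ S → IsWord S 1 a
  | mul : ∀ {m n : ℕ} {a b : A}, 0 < m → 0 < n → IsWord S m a → IsWord S n b →
      IsWord S (m + n) (a * b)

/-- `Lspan F S k` is the `F`-linear span of all words in `S` of length at most `k`. -/
def Lspan (F : Type*) {A : Type*} [Field F] [NonAssocRing A] [Module F A]
    (S : Set A) (k : ℕ) : Submodule F A :=
  Submodule.span F {a | ∃ m ≤ k, IsWord S m a}

/-- `S` generates the algebra `A` iff the union of all the `Lspan F S k` is all of `A`. -/
def Generates (F : Type*) {A : Type*} [Field F] [NonAssocRing A] [Module F A]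
    (S : Set A) : Prop :=
  (⨆ k, Lspan F S k) = ⊤

/-- The length of a generating set: the least `k` with `Lspan F S k = ⊤`. -/
noncomputable def len (F : Type*) {A : Type*} [Field F] [NonAssocRing A] [Module F A]
    (S : Set A) : ℕ :=
  sInf {k | Lspan F S k = ⊤}

/-- The length of the algebra: the maximum of `len F S` over all finite generating sets. -/
noncomputable def algLen (F : Type*) (A : Type*) [Field F] [NonAssocRing A] [Module F A] : ℕ :=
  sSup {l | ∃ S : Set A, S.Finite ∧ Generates F S ∧ len F S = l}

/-- `w` is a fresh word of length `n` in `S`: a word of length `n` lying in no `Lspan F S m`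
for `m < n`. -/
def Fresh (F : Type*) {A : Type*} [Field F] [NonAssocRing A] [Module F A]
    (S : Set A) (n : ℕ) (w : A) : Prop :=
  IsWord S n w ∧ ∀ m < n, w ∉ Lspan F S m

/-- `(m 0, m 1, …, m N)` is the characteristic sequence of `S`: a non-decreasing sequence
with `m 0 = 0` in which each `k ≥ 1` occurs exactly
`dim Lspan F S k − dim Lspan F S (k-1)` times. -/
def IsCharSeq (F : Type*) {A : Type*} [Field F] [NonAssocRing A] [Module F A]
    (S : Set A) (N : ℕ) (m : ℕ → ℕ) : Prop :=
  m 0 = 0 ∧ (∀ i j, i ≤ j → j ≤ N → m i ≤ m j) ∧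
  (∀ t, 1 ≤ t → t ≤ N → 1 ≤ m t) ∧
  ∀ k, 1 ≤ k →
    ((Finset.range (N + 1)).filter (fun t => m t = k)).card
      = Module.finrank F (Lspan F S k) - Module.finrank F (Lspan F S (k - 1))


lemma lspan_mono (F : Type*) {A : Type*} [Field F] [NonAssocRing A] [Module F A]
    (S : Set A) {j k : ℕ} (hjk : j ≤ k) : Lspan F S j ≤ Lspan F S k :=
  Submodule.span_mono fun _ ⟨m, hm, hw⟩ => ⟨m, hm.trans hjk, hw⟩

lemma word_mem_lspan (F : Type*) {A : Type*} [Field F] [NonAssocRing A] [Module F A]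
    (S : Set A) {m k : ℕ} {a : A} (hw : IsWord S m a) (hm : m ≤ k) :
    a ∈ Lspan F S k :=
  Submodule.subset_span ⟨m, hm, hw⟩

lemma isWord_zero {A : Type*} [NonAssocRing A] {S : Set A} {k : ℕ} {a : A}
    (hw : IsWord S k a) (hk : k = 0) : a = 1 := by
  cases hw with
  | one => rfl
  | base a ha => omega
  | mul hm hn _ _ => omega

lemma word_mul_mem (F : Type*) {A : Type*} [Field F] [NonAssocRing A] [Module F A]
    [SMulCommClass F A A] [IsScalarTower F A A]
    {S : Set A} {px p q : ℕ} {x y : A} (hwx : IsWord S px x) (hpx : px ≤ p)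
    (hy : y ∈ Lspan F S q) : x * y ∈ Lspan F S (p + q) := by
  have : Lspan F S q ≤ (Lspan F S (p + q)).comap (LinearMap.mulLeft F x) := by
    rw [Lspan, Submodule.span_le]
    rintro z ⟨qz, hqz, hwz⟩
    simp only [Submodule.mem_comap, LinearMap.mulLeft_apply, SetLike.mem_coe]
    rcases Nat.eq_zero_or_pos px with h0 | hp
    · rw [isWord_zero hwx h0, one_mul]
      exact word_mem_lspan F S hwz (by omega)
    rcases Nat.eq_zero_or_pos qz with h0 | hq
    · rw [isWord_zero hwz h0, mul_one]
      exact word_mem_lspan F S hwx (by omega)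
    exact word_mem_lspan F S (IsWord.mul hp hq hwx hwz) (by omega)
  exact this hy

lemma lspan_mul_mem (F : Type*) {A : Type*} [Field F] [NonAssocRing A] [Module F A]
    [SMulCommClass F A A] [IsScalarTower F A A]
    {S : Set A} {p q : ℕ} {x y : A} (hx : x ∈ Lspan F S p) (hy : y ∈ Lspan F S q) :
    x * y ∈ Lspan F S (p + q) := by
  have : Lspan F S p ≤ (Lspan F S (p + q)).comap (LinearMap.mulRight F y) := by
    rw [Lspan, Submodule.span_le]
    rintro z ⟨pz, hpz, hwz⟩
    simp only [Submodule.mem_comap, LinearMap.mulRight_apply, SetLike.mem_coe]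
    exact word_mul_mem F hwz hpz hy
  exact this hx

theorem stmt_3 (F : Type*) (A : Type*) [Field F] [NonAssocRing A] [Module F A]
    [SMulCommClass F A A] [IsScalarTower F A A] [FiniteDimensional F A]
    (S : Set A) (hS : S.Finite) (n : ℕ) (hn : 1 ≤ n)
    (h : ∀ i, n ≤ i → i ≤ 2 * n →
      Module.finrank F (Lspan F S i) = Module.finrank F (Lspan F S n)) :
    (∀ t : ℕ, Module.finrank F (Lspan F S (n + t)) = Module.finrank F (Lspan F S n)) ∧
    (∀ m, n ≤ m → Lspan F S m = Lspan F S n) := by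
  have heq : ∀ i, n ≤ i → i ≤ 2 * n → Lspan F S i = Lspan F S n := by
    intro i hni hi2n
    refine (Submodule.eq_of_le_of_finrank_le (lspan_mono F S hni) (h i hni hi2n).le).symm
  have key : ∀ {k : ℕ} {a : A}, IsWord S k a → a ∈ Lspan F S n := by
    intro k a hw
    induction hw with
    | one => exact word_mem_lspan F S IsWord.one (by omega)
    | base a ha => exact word_mem_lspan F S (IsWord.base a ha) hn
    | mul hm hn' hwx hwy ihx ihy =>
      have : _ * _ ∈ Lspan F S (n + n) := lspan_mul_mem F ihx ihy
      rwa [show n + n = 2 * n by ring, heq (2 * n) (by omega) le_rfl] at this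
  have main : ∀ m, n ≤ m → Lspan F S m = Lspan F S n := by
    intro m hm
    refine le_antisymm ?_ (lspan_mono F S hm)
    rw [Lspan, Submodule.span_le]
    rintro a ⟨k, _, hw⟩
    exact key hw
  exact ⟨fun t => by rw [main (n + t) (by omega)], main⟩
end

section
/- For each n > 2 there exists an (n+2)-dimensional unital F-algebra A with basis 1, e_1, ..., e_{n+1}, multiplication e_1² = e_2, e_1 e_i = e_{i+1} and e_i e_1 = 0 for 2 ≤ i ≤ n−1, e_n² = e_{n+1}, e_{n+1}² = 0, and e_i e_j = 0 for all other pairs i ≠ j with i, j ≥ 2, such that for S = {e_1} one has L_{2n−1}(S) = L_n(S) but L_{2n}(S) ≠ L_n(S). -/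
/-- A bundled (not necessarily associative) unital `F`-algebra. -/
structure AlgWitness (F : Type*) [Field F] where
  carrier : Type
  [ring : NonAssocRing carrier]
  [mod : Module F carrier]
  [scc : SMulCommClass F carrier carrier]
  [ist : IsScalarTower F carrier carrier]

attribute [instance] AlgWitness.ring AlgWitness.mod AlgWitness.scc AlgWitness.ist

/-!
The algebra lives on `Fin (n + 2) → F`, with its multiplication defined on the standard basis.
The only nonzero products of basis vectors of positive index are `e₁ e_j = e_{j+1}` (`j < n`)
and `e_n e_n = e_{n+1}`, so a word of length `m` in `e₁` is `0`, or `e_m` when `m ≤ n`, or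
`e_{n+1}` when `m = 2n`. Hence `L_k = span (e₀, …, e_n)` for `n ≤ k < 2n`, while the word
`e_n e_n` of length `2n` is `e_{n+1}`, which lies outside this span.
-/

open Module

abbrev NonAssocRing.ofBilinear {R M : Type*} [CommRing R] [AddCommGroup M] [Module R M]
    (μ : M →ₗ[R] M →ₗ[R] M) (u : M) (one_mul : ∀ x, μ u x = x) (mul_one : ∀ x, μ x u = x) :
    NonAssocRing M where
  __ := ‹AddCommGroup M›
  mul x y := μ x y
  one := u
  left_distrib x y z := (μ x).map_add y z
  right_distrib x y z := μ.map_add₂ x y z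
  zero_mul x := μ.map_zero₂ x
  mul_zero x := (μ x).map_zero
  one_mul := one_mul
  mul_one := mul_one

section Lspan

variable {F A : Type*} [Field F] [NonAssocRing A] [Module F A] {S : Set A}

theorem IsWord.mem_Lspan {m k : ℕ} {a : A} (h : IsWord S m a) (hmk : m ≤ k) : a ∈ Lspan F S k :=
  Submodule.subset_span ⟨m, hmk, h⟩

theorem Lspan_mono {k l : ℕ} (h : k ≤ l) : Lspan F S k ≤ Lspan F S l :=
  Submodule.span_mono fun _ ⟨m, hm, ha⟩ => ⟨m, hm.trans h, ha⟩

theorem Lspan_le {k : ℕ} {P : Submodule F A} (h : ∀ m ≤ k, ∀ a, IsWord S m a → a ∈ P) :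
    Lspan F S k ≤ P :=
  Submodule.span_le.2 fun a ⟨m, hm, ha⟩ => h m hm a ha

end Lspan

def CounterAlg (F : Type) (n : ℕ) : Type := Fin (n + 2) → F

namespace CounterAlg

noncomputable section

variable (F : Type) [CommRing F] (n : ℕ)

instance : AddCommGroup (CounterAlg F n) := inferInstanceAs (AddCommGroup (Fin (n + 2) → F))

instance : Module F (CounterAlg F n) := inferInstanceAs (Module F (Fin (n + 2) → F))

def basis : Basis (Fin (n + 2)) F (CounterAlg F n) := Pi.basisFun F (Fin (n + 2))

def e (k : ℕ) : CounterAlg F n := if h : k < n + 2 then basis F n ⟨k, h⟩ else 0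

theorem e_val (i : Fin (n + 2)) : e F n i = basis F n i := dif_pos i.isLt

def mulTable (i j : ℕ) : CounterAlg F n :=
  if i = 0 then e F n j
  else if j = 0 then e F n i
  else if i = 1 ∧ j ≤ n - 1 then e F n (j + 1)
  else if i = n ∧ j = n then e F n (n + 1)
  else 0

theorem mulTable_zero_left (j : ℕ) : mulTable F n 0 j = e F n j := if_pos rfl

theorem mulTable_zero_right (i : ℕ) : mulTable F n i 0 = e F n i := by
  unfold mulTable; split_ifs <;> simp_all

def mulMap : CounterAlg F n →ₗ[F] CounterAlg F n →ₗ[F] CounterAlg F n :=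
  (basis F n).constr F fun i => (basis F n).constr F fun j => mulTable F n i j

theorem mulMap_basis (i j : Fin (n + 2)) :
    mulMap F n (basis F n i) (basis F n j) = mulTable F n i j := by
  simp [mulMap]

theorem e_eq_zero {k : ℕ} (hk : n + 2 ≤ k) : e F n k = 0 := dif_neg (by omega)

theorem mulTable_eq_zero {i j : ℕ} (h : n + 2 ≤ i ∨ n + 2 ≤ j) : mulTable F n i j = 0 := by
  unfold mulTable
  split_ifs <;> first | rfl | exact e_eq_zero F n (by omega)

theorem mulMap_e (i j : ℕ) : mulMap F n (e F n i) (e F n j) = mulTable F n i j := by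
  by_cases hi : i < n + 2
  · by_cases hj : j < n + 2
    · simpa only [e, dif_pos hi, dif_pos hj] using mulMap_basis F n ⟨i, hi⟩ ⟨j, hj⟩
    · rw [e_eq_zero F n (k := j) (by omega), map_zero, mulTable_eq_zero F n (by omega)]
  · rw [e_eq_zero F n (by omega), map_zero, LinearMap.zero_apply, mulTable_eq_zero F n (by omega)]

theorem mulMap_e_zero (x : CounterAlg F n) : mulMap F n (e F n 0) x = x := by
  have : mulMap F n (e F n 0) = LinearMap.id :=
    (basis F n).ext fun j => by simp [← e_val, mulMap_e, mulTable_zero_left]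
  exact LinearMap.congr_fun this x

theorem mulMap_e_zero_right (x : CounterAlg F n) : mulMap F n x (e F n 0) = x := by
  have : (mulMap F n).flip (e F n 0) = LinearMap.id :=
    (basis F n).ext fun i => by simp [← e_val, mulMap_e, mulTable_zero_right]
  exact LinearMap.congr_fun this x

instance : NonAssocRing (CounterAlg F n) :=
  .ofBilinear (mulMap F n) (e F n 0) (mulMap_e_zero F n) (mulMap_e_zero_right F n)

instance : SMulCommClass F (CounterAlg F n) (CounterAlg F n) :=
  ⟨fun r x y => ((mulMap F n x).map_smul r y).symm⟩

instance : IsScalarTower F (CounterAlg F n) (CounterAlg F n) :=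
  ⟨fun r x y => (mulMap F n).map_smul₂ r x y⟩

theorem e_mul_e (i j : ℕ) : e F n i * e F n j = mulTable F n i j := mulMap_e F n i j

theorem e_one_mul_e {j : ℕ} (hj : j ≠ 0) (hjn : j ≤ n - 1) :
    e F n 1 * e F n j = e F n (j + 1) := by
  rw [e_mul_e, mulTable, if_neg one_ne_zero, if_neg hj, if_pos ⟨rfl, hjn⟩]

theorem e_n_mul_e_n (hn : n ≠ 0) : e F n n * e F n n = e F n (n + 1) := by
  rw [e_mul_e, mulTable, if_neg hn, if_neg hn, if_neg (by omega), if_pos ⟨rfl, rfl⟩]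

theorem e_mul_e_eq_zero {i j : ℕ} (hi : i ≠ 0) (hj : j ≠ 0) (h₁ : ¬(i = 1 ∧ j ≤ n - 1))
    (h₂ : ¬(i = n ∧ j = n)) : e F n i * e F n j = 0 := by
  rw [e_mul_e, mulTable, if_neg hi, if_neg hj, if_neg h₁, if_neg h₂]

def wordValue (m : ℕ) : CounterAlg F n :=
  if m ≤ n then e F n m else if m = 2 * n then e F n (n + 1) else 0

theorem wordValue_mul_wordValue {p q : ℕ} (hp : 0 < p) (hq : 0 < q) :
    wordValue F n p * wordValue F n q = 0 ∨
      wordValue F n p * wordValue F n q = wordValue F n (p + q) := by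
  simp only [wordValue]
  split_ifs <;> simp only [zero_mul, mul_zero, true_or, e_mul_e, mulTable] <;> split_ifs <;>
    first | (left; rfl) | (right; rfl) | (right; congr 1; omega) | contradiction

theorem isWord_e {m : ℕ} (hm : m ≤ n) : IsWord {e F n 1} m (e F n m) := by
  induction m with
  | zero => exact IsWord.one
  | succ m ih =>
    rcases Nat.eq_zero_or_pos m with rfl | hm₀
    · exact IsWord.base _ rfl
    · rw [← e_one_mul_e F n hm₀.ne' (by omega), Nat.add_comm]
      exact IsWord.mul one_pos hm₀ (IsWord.base _ rfl) (ih (by omega))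

theorem isWord_e_succ (hn : 0 < n) : IsWord {e F n 1} (2 * n) (e F n (n + 1)) := by
  rw [← e_n_mul_e_n F n hn.ne', two_mul]
  exact IsWord.mul hn hn (isWord_e F n le_rfl) (isWord_e F n le_rfl)

theorem eq_zero_or_eq_wordValue_of_isWord (hn : 0 < n) {m : ℕ} {w : CounterAlg F n}
    (h : IsWord {e F n 1} m w) : w = 0 ∨ w = wordValue F n m := by
  induction h with
  | one => exact Or.inr (if_pos (Nat.zero_le n)).symm
  | base a ha => exact Or.inr (ha.trans (if_pos hn).symm)
  | mul hp hq _ _ iha ihb =>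
    rcases iha with rfl | rfl
    · exact Or.inl (zero_mul _)
    rcases ihb with rfl | rfl
    · exact Or.inl (mul_zero _)
    exact wordValue_mul_wordValue F n hp hq

end

section Lspan

variable (F : Type) [Field F] (n : ℕ)

theorem wordValue_mem_Lspan {m : ℕ} (hm : m ≠ 2 * n) : wordValue F n m ∈ Lspan F {e F n 1} n := by
  unfold wordValue
  split_ifs with hmn
  · exact (isWord_e F n hmn).mem_Lspan hmn
  · exact zero_mem _

theorem Lspan_eq_Lspan_n (hn : 0 < n) {k : ℕ} (hnk : n ≤ k) (hk : k < 2 * n) :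
    Lspan F {e F n 1} k = Lspan F {e F n 1} n := by
  refine le_antisymm (Lspan_le fun m hm w hw => ?_) (Lspan_mono hnk)
  rcases eq_zero_or_eq_wordValue_of_isWord F n hn hw with rfl | rfl
  · exact zero_mem _
  · exact wordValue_mem_Lspan F n (by omega)

theorem Lspan_n_le_span_basis (hn : 0 < n) :
    Lspan F {e F n 1} n ≤ Submodule.span F (basis F n '' {i | (i : ℕ) ≤ n}) := by
  refine Lspan_le fun m hm w hw => ?_
  rcases eq_zero_or_eq_wordValue_of_isWord F n hn hw with rfl | rfl
  · exact zero_mem _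
  · rw [wordValue, if_pos hm, ← Fin.val_mk (show m < n + 2 by omega), e_val]
    exact Submodule.subset_span ⟨_, hm, rfl⟩

theorem e_succ_notMem_Lspan_n (hn : 0 < n) : e F n (n + 1) ∉ Lspan F {e F n 1} n := by
  intro h
  rw [← Fin.val_last (n + 1), e_val] at h
  exact (basis F n).linearIndependent.notMem_span_image (by simp)
    (Lspan_n_le_span_basis F n hn h)

theorem Lspan_two_mul_ne_Lspan_n (hn : 0 < n) :
    Lspan F {e F n 1} (2 * n) ≠ Lspan F {e F n 1} n := fun h =>
  e_succ_notMem_Lspan_n F n hn (h ▸ (isWord_e_succ F n hn).mem_Lspan le_rfl)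

end Lspan

end CounterAlg

theorem stmt_4 (F : Type) [Field F] (n : ℕ) (hn : 2 < n) :
    ∃ (Wit : AlgWitness F) (e : ℕ → Wit.carrier),
      Module.finrank F Wit.carrier = n + 2 ∧
      e 0 = 1 ∧
      LinearIndependent F (fun i : Fin (n + 2) => e i.val) ∧
      Submodule.span F (Set.range (fun i : Fin (n + 2) => e i.val)) = ⊤ ∧
      e 1 * e 1 = e 2 ∧
      (∀ i, 2 ≤ i → i ≤ n - 1 → e 1 * e i = e (i + 1) ∧ e i * e 1 = 0) ∧
      e n * e n = e (n + 1) ∧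
      e (n + 1) * e (n + 1) = 0 ∧
      (∀ i j, 2 ≤ i → i ≤ n + 1 → 2 ≤ j → j ≤ n + 1 → i ≠ j → e i * e j = 0) ∧
      Lspan F {e 1} (2 * n - 1) = Lspan F {e 1} n ∧
      Lspan F {e 1} (2 * n) ≠ Lspan F {e 1} n := by
  refine ⟨⟨CounterAlg F n⟩, CounterAlg.e F n, ?_, rfl, ?_, ?_, ?_, ?_, ?_, ?_, ?_, ?_, ?_⟩
  · rw [Module.finrank_eq_card_basis (CounterAlg.basis F n), Fintype.card_fin]
  · simpa only [CounterAlg.e_val] using (CounterAlg.basis F n).linearIndependent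
  · simpa only [CounterAlg.e_val, Set.range] using (CounterAlg.basis F n).span_eq
  · exact CounterAlg.e_one_mul_e F n one_ne_zero (by omega)
  · exact fun i hi hin => ⟨CounterAlg.e_one_mul_e F n (by omega) hin,
      CounterAlg.e_mul_e_eq_zero F n (by omega) one_ne_zero (by omega) (by omega)⟩
  · exact CounterAlg.e_n_mul_e_n F n (by omega)
  · exact CounterAlg.e_mul_e_eq_zero F n (by omega) (by omega) (by omega) (by omega)
  · exact fun i j hi hin hj hjn hij =>
      CounterAlg.e_mul_e_eq_zero F n (by omega) (by omega) (by omega) (by omega)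
  · exact CounterAlg.Lspan_eq_Lspan_n F n (by omega) (by omega) (by omega)
  · exact CounterAlg.Lspan_two_mul_ne_Lspan_n F n (by omega)
end

section
/- For every n > 2 and every field F, the n-dimensional unital F-algebra A with basis 1 = e_0, e_1, ..., e_{n−1}, multiplication e_k² = e_{k+1} for 1 ≤ k ≤ n−2, e_{n−1}² = 0, and e_p e_q = 0 for p ≠ q (p, q ≥ 1), satisfies l(A) = 2^{n−2}. -/
/-! The upper bound holds in every finite-dimensional algebra. If `Lspan` grows from `ℓ` to
`ℓ + 1`, some word of length `ℓ + 1` is new; it is a product of two words, and each factor length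
must itself be a growth step, since otherwise the factor could be rewritten with shorter words.
Induction on the longer factor, using `dim Lspan 0 = 1` and that the dimension increases at every
growth step, gives `4 (ℓ + 1) ≤ 2 ^ dim Lspan (ℓ + 1)`.

For the lower bound, realize `A` as the unitization of the span of `e₁, …, eₙ₋₁`. The words in
`{e₁}` are `1`, `0` and `eᵢ₊₁ = e₁^(2^i)` of length `2 ^ i`, so `eₙ₋₁` is not reached before
length `2 ^ (n - 2)`. -/

section LengthBound

variable {F A : Type*} [Field F] [NonAssocRing A] [Module F A] {S : Set A}

theorem IsWord.eq_one_of_length_zero {w : A} (h : IsWord S 0 w) : w = 1 := by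
  generalize hm : 0 = m at h
  cases h with
  | one => rfl
  | base => omega
  | mul => omega

theorem IsWord.mem_lspan {m : ℕ} {w : A} (h : IsWord S m w) : w ∈ Lspan F S m :=
  Submodule.subset_span ⟨m, le_rfl, h⟩

theorem lspan_mono_s12 : Monotone (Lspan F S) := fun _ _ hjk =>
  Submodule.span_mono fun _ ⟨m, hm, hw⟩ => ⟨m, hm.trans hjk, hw⟩

theorem lspan_zero : Lspan F S 0 = F ∙ (1 : A) := by
  refine congrArg _ (Set.ext fun a => ⟨?_, ?_⟩)
  · rintro ⟨m, hm, hw⟩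
    obtain rfl := Nat.le_zero.1 hm
    exact hw.eq_one_of_length_zero
  · rintro rfl
    exact ⟨0, le_rfl, .one⟩

theorem finrank_lspan_zero [Nontrivial A] : Module.finrank F (Lspan F S 0) = 1 := by
  rw [lspan_zero]
  exact finrank_span_singleton one_ne_zero

theorem exists_lspan_eq_top [FiniteDimensional F A] (hS : Generates F S) :
    ∃ k, Lspan F S k = ⊤ := by
  let L : ℕ →o Submodule F A := ⟨Lspan F S, lspan_mono_s12⟩
  exact ⟨_, (WellFoundedGT.iSup_eq_monotonicSequenceLimit L).symm.trans hS⟩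

theorem exists_isWord_notMem_of_lspan_lt {ℓ : ℕ} (h : Lspan F S ℓ < Lspan F S (ℓ + 1)) :
    ∃ w, IsWord S (ℓ + 1) w ∧ w ∉ Lspan F S ℓ := by
  by_contra! hw
  refine h.not_ge (Submodule.span_le.2 ?_)
  rintro a ⟨m, hm, ha⟩
  rcases hm.lt_or_eq with hm | rfl
  · exact lspan_mono_s12 (Nat.le_of_lt_succ hm) ha.mem_lspan
  · exact hw a ha

variable [SMulCommClass F A A] [IsScalarTower F A A]

theorem mul_mem_lspan {i j : ℕ} {x y : A} (hx : x ∈ Lspan F S i) (hy : y ∈ Lspan F S j) :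
    x * y ∈ Lspan F S (i + j) := by
  refine (Submodule.map₂_le (f := LinearMap.mul F A)).1 ?_ x hx y hy
  rw [Lspan, Lspan, Submodule.map₂_span_span, Submodule.span_le]
  rintro _ ⟨u, ⟨a, ha, hu⟩, v, ⟨b, hb, hv⟩, rfl⟩
  rcases Nat.eq_zero_or_pos a with rfl | ha0
  · simpa [hu.eq_one_of_length_zero] using lspan_mono_s12 (by omega) hv.mem_lspan
  rcases Nat.eq_zero_or_pos b with rfl | hb0
  · simpa [hv.eq_one_of_length_zero] using lspan_mono_s12 (by omega) hu.mem_lspan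
  exact lspan_mono_s12 (by omega) (hu.mul ha0 hb0 hv).mem_lspan

theorem exists_lspan_lt_of_lspan_lt {ℓ : ℕ} (hℓ : 0 < ℓ)
    (h : Lspan F S ℓ < Lspan F S (ℓ + 1)) :
    ∃ a b, a + b + 1 = ℓ ∧ Lspan F S a < Lspan F S (a + 1) ∧ Lspan F S b < Lspan F S (b + 1) := by
  obtain ⟨w, hw, hnot⟩ := exists_isWord_notMem_of_lspan_lt h
  generalize hm : ℓ + 1 = m at hw
  cases hw with
  | one => omega
  | base => omega
  | @mul p q u v hp hq hu hv =>
    refine ⟨p - 1, q - 1, by omega, lt_of_le_of_ne (lspan_mono_s12 (by omega)) fun heq => hnot ?_,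
      lt_of_le_of_ne (lspan_mono_s12 (by omega)) fun heq => hnot ?_⟩
    · have hu' : u ∈ Lspan F S (p - 1) := by rw [heq, Nat.sub_add_cancel hp]; exact hu.mem_lspan
      exact lspan_mono_s12 (by omega) (mul_mem_lspan hu' hv.mem_lspan)
    · have hv' : v ∈ Lspan F S (q - 1) := by rw [heq, Nat.sub_add_cancel hq]; exact hv.mem_lspan
      exact lspan_mono_s12 (by omega) (mul_mem_lspan hu.mem_lspan hv')

variable [FiniteDimensional F A] [Nontrivial A]

theorem four_mul_le_two_pow_finrank_of_lspan_lt {ℓ : ℕ} (h : Lspan F S ℓ < Lspan F S (ℓ + 1)) :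
    4 * (ℓ + 1) ≤ 2 ^ Module.finrank F (Lspan F S (ℓ + 1)) := by
  set d : ℕ → ℕ := fun k => Module.finrank F (Lspan F S k)
  have hd_mono : Monotone d := fun _ _ hjk => Submodule.finrank_mono (lspan_mono_s12 hjk)
  have hd_lt {k : ℕ} (hk : Lspan F S k < Lspan F S (k + 1)) : d k < d (k + 1) :=
    Submodule.finrank_lt_finrank_of_lt hk
  have hd_zero : d 0 = 1 := finrank_lspan_zero
  induction ℓ using Nat.strong_induction_on with
  | _ ℓ ih =>
    rcases Nat.eq_zero_or_pos ℓ with rfl | hℓ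
    · have : d 0 < d 1 := hd_lt h
      calc 4 * (0 + 1) = 2 ^ 2 := by norm_num
        _ ≤ 2 ^ d 1 := Nat.pow_le_pow_right two_pos (by omega)
    obtain ⟨a, b, hab, ha, hb⟩ := exists_lspan_lt_of_lspan_lt hℓ h
    obtain ⟨c, hcℓ, hc_half, hc⟩ : ∃ c < ℓ, ℓ + 1 ≤ 2 * (c + 1) ∧
        Lspan F S c < Lspan F S (c + 1) := by
      rcases le_total a b with hle | hle
      exacts [⟨b, by omega, by omega, hb⟩, ⟨a, by omega, by omega, ha⟩]
    have hdc : d (c + 1) + 1 ≤ d (ℓ + 1) := (hd_mono (show c + 1 ≤ ℓ by omega)).trans_lt (hd_lt h)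
    calc 4 * (ℓ + 1) ≤ 2 * (4 * (c + 1)) := by omega
      _ ≤ 2 * 2 ^ d (c + 1) := Nat.mul_le_mul_left 2 (ih c hcℓ hc)
      _ = 2 ^ (d (c + 1) + 1) := (pow_succ' 2 _).symm
      _ ≤ 2 ^ d (ℓ + 1) := Nat.pow_le_pow_right two_pos hdc

theorem len_le_two_pow_finrank_sub_two (hS : Generates F S) :
    len F S ≤ 2 ^ (Module.finrank F A - 2) := by
  obtain ⟨k, hk⟩ := exists_lspan_eq_top hS
  have htop : Lspan F S (len F S) = ⊤ := Nat.sInf_mem (s := {k | Lspan F S k = ⊤}) ⟨k, hk⟩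
  rcases Nat.eq_zero_or_pos (len F S) with h0 | hpos
  · simp [h0]
  obtain ⟨ℓ, hℓ⟩ := Nat.exists_eq_add_one_of_ne_zero hpos.ne'
  have hlt : Lspan F S ℓ < Lspan F S (ℓ + 1) := by
    rw [← hℓ, htop]
    exact lt_top_iff_ne_top.2 (Nat.notMem_of_lt_sInf (show ℓ < len F S by omega))
  have hbound := four_mul_le_two_pow_finrank_of_lspan_lt hlt
  rw [← hℓ, htop, finrank_top] at hbound
  obtain ⟨D, hD⟩ : ∃ D, Module.finrank F A = D + 2 := by
    refine Nat.exists_eq_add_of_le' (Nat.pow_le_pow_iff_right one_lt_two |>.1 ?_)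
    omega
  rw [hD, pow_add] at hbound
  rw [hD, Nat.add_sub_cancel]
  omega

theorem algLen_eq_of_len_eq (hfin : S.Finite) (hS : Generates F S)
    (hlen : len F S = 2 ^ (Module.finrank F A - 2)) :
    algLen F A = 2 ^ (Module.finrank F A - 2) :=
  IsGreatest.csSup_eq ⟨⟨S, hfin, hS, hlen⟩, by
    rintro _ ⟨T, -, hT, rfl⟩
    exact len_le_two_pow_finrank_sub_two hT⟩

end LengthBound

namespace Unitization

variable {R A : Type*} [CommRing R] [NonUnitalNonAssocRing A] [Module R A]
  [SMulCommClass R A A] [IsScalarTower R A A]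

instance instSMulCommClassSelf : SMulCommClass R (Unitization R A) (Unitization R A) :=
  ⟨fun r x y => Unitization.ext (by simp [mul_left_comm]) (by
    simp only [smul_eq_mul, snd_mul, snd_smul, fst_smul, smul_add, mul_smul_comm]
    module)⟩

instance instIsScalarTowerSelf : IsScalarTower R (Unitization R A) (Unitization R A) :=
  ⟨fun r x y => Unitization.ext (by simp [mul_assoc]) (by
    simp only [smul_eq_mul, snd_mul, snd_smul, fst_smul, smul_add, smul_mul_assoc]
    module)⟩

instance instModuleFinite [Module.Finite R A] : Module.Finite R (Unitization R A) :=
  Module.Finite.equiv (linearEquiv R R A).symm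

end Unitization

/-- The span of `e₁, …, eₘ`, with `eᵢ₊₁` stored as `single i`: the product is the coordinatewise
product shifted up by one coordinate, so `eᵢ² = eᵢ₊₁`, `eₘ² = 0` and `eₚ eₚ' = 0` for `p ≠ p'`. -/
def SquareChain (F : Type) (m : ℕ) : Type := Fin m → F

namespace SquareChain

variable {F : Type} [Field F] {m : ℕ}

instance : AddCommGroup (SquareChain F m) := inferInstanceAs (AddCommGroup (Fin m → F))

instance : Module F (SquareChain F m) := inferInstanceAs (Module F (Fin m → F))

instance : Module.Finite F (SquareChain F m) := inferInstanceAs (Module.Finite F (Fin m → F))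

instance : Mul (SquareChain F m) where
  mul x y i := if h : (i : ℕ) = 0 then 0 else x ⟨i - 1, by omega⟩ * y ⟨i - 1, by omega⟩

theorem mul_apply (x y : SquareChain F m) (i : Fin m) :
    (x * y) i = if h : (i : ℕ) = 0 then 0 else x ⟨i - 1, by omega⟩ * y ⟨i - 1, by omega⟩ :=
  rfl

@[simp] theorem add_apply (x y : SquareChain F m) (i : Fin m) : (x + y) i = x i + y i := rfl

@[simp] theorem zero_apply (i : Fin m) : (0 : SquareChain F m) i = 0 := rfl

@[simp] theorem smul_apply (c : F) (x : SquareChain F m) (i : Fin m) : (c • x) i = c * x i := rfl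

instance : NonUnitalNonAssocRing (SquareChain F m) where
  left_distrib x y z := funext fun i => by simp only [mul_apply, add_apply]; split_ifs <;> ring
  right_distrib x y z := funext fun i => by simp only [mul_apply, add_apply]; split_ifs <;> ring
  zero_mul x := funext fun i => by simp only [mul_apply, zero_apply]; split_ifs <;> ring
  mul_zero x := funext fun i => by simp only [mul_apply, zero_apply]; split_ifs <;> ring

instance : SMulCommClass F (SquareChain F m) (SquareChain F m) :=
  ⟨fun c x y => funext fun i => by
    simp only [smul_eq_mul, mul_apply, smul_apply]; split_ifs <;> ring⟩

instance : IsScalarTower F (SquareChain F m) (SquareChain F m) :=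
  ⟨fun c x y => funext fun i => by
    simp only [smul_eq_mul, mul_apply, smul_apply]; split_ifs <;> ring⟩

def single (i : ℕ) : SquareChain F m := fun j => if (j : ℕ) = i then 1 else 0

theorem single_eq_zero_of_le {i : ℕ} (h : m ≤ i) : (single i : SquareChain F m) = 0 :=
  funext fun j => if_neg (by omega)

theorem single_mul_single (p q : ℕ) :
    (single p * single q : SquareChain F m) = if p = q then single (p + 1) else 0 := by
  funext j
  split_ifs with hpq
  · subst hpq
    simp only [mul_apply, single]
    split_ifs <;> first | omega | simp
  · simp only [mul_apply, single, zero_apply]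
    split_ifs <;> first | omega | simp

theorem span_range_single :
    Submodule.span F (Set.range fun j : Fin m => (single j : SquareChain F m)) = ⊤ := by
  have hbasis : (fun j : Fin m => (single j : SquareChain F m)) = Pi.basisFun F (Fin m) := by
    funext j k
    simp [single, Pi.single_apply, Fin.ext_iff]
  rw [hbasis]
  exact (Pi.basisFun F (Fin m)).span_eq

variable (F m) in
def e : ℕ → Unitization F (SquareChain F m)
  | 0 => 1
  | i + 1 => (single i : SquareChain F m)

theorem e_mul_e {p q : ℕ} (hp : 1 ≤ p) (hq : 1 ≤ q) :
    e F m p * e F m q = if p = q then e F m (p + 1) else 0 := by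
  obtain ⟨p, rfl⟩ := Nat.exists_eq_add_of_le' hp
  obtain ⟨q, rfl⟩ := Nat.exists_eq_add_of_le' hq
  rw [e, e, ← Unitization.inr_mul, single_mul_single]
  split_ifs <;> simp_all [e]

theorem e_eq_zero_of_lt {i : ℕ} (h : m < i) : e F m i = 0 := by
  obtain ⟨j, rfl⟩ := Nat.exists_eq_add_one_of_ne_zero (by omega : i ≠ 0)
  rw [e, single_eq_zero_of_le (by omega), Unitization.inr_zero]

theorem finrank_unitization : Module.finrank F (Unitization F (SquareChain F m)) = m + 1 := by
  rw [(Unitization.linearEquiv F F _).finrank_eq, Module.finrank_prod, Module.finrank_self,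
    add_comm]
  exact congrArg (· + 1) (Module.finrank_fin_fun F)

theorem span_range_e :
    Submodule.span F (Set.range fun i : Fin (m + 1) => e F m i) = ⊤ := by
  set P := Submodule.span F (Set.range fun i : Fin (m + 1) => e F m i)
  have he {i : ℕ} (hi : i ≤ m) : e F m i ∈ P := Submodule.subset_span ⟨⟨i, by omega⟩, rfl⟩
  refine Submodule.eq_top_iff'.2 fun x => ?_
  rw [← x.inl_fst_add_inr_snd_eq]
  refine P.add_mem ?_ ?_
  · rw [← mul_one x.fst, ← smul_eq_mul, Unitization.inl_smul, Unitization.inl_one]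
    exact P.smul_mem _ (he m.zero_le)
  · have hinr : Submodule.span F (Set.range fun j : Fin m => (single j : SquareChain F m)) ≤
        P.comap (Unitization.inrHom F F _) :=
      Submodule.span_le.2 fun _ ⟨j, hj⟩ => hj ▸ he (i := j + 1) j.isLt
    exact (span_range_single (F := F) ▸ hinr) Submodule.mem_top

theorem linearIndependent_e : LinearIndependent F fun i : Fin (m + 1) => e F m i :=
  linearIndependent_of_top_le_span_of_card_eq_finrank span_range_e.ge
    (by rw [Fintype.card_fin, finrank_unitization])

theorem isWord_e_one_cases {ℓ : ℕ} {w : Unitization F (SquareChain F m)}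
    (h : IsWord {e F m 1} ℓ w) :
    (ℓ = 0 ∧ w = 1) ∨ w = 0 ∨ ∃ i, ℓ = 2 ^ i ∧ w = e F m (i + 1) := by
  induction h with
  | one => exact .inl ⟨rfl, rfl⟩
  | base a ha => exact .inr (.inr ⟨0, rfl, ha⟩)
  | mul hp hq _ _ ihu ihv =>
    rcases ihu with ⟨rfl, -⟩ | rfl | ⟨i, rfl, rfl⟩
    · omega
    · exact .inr (.inl (zero_mul _))
    rcases ihv with ⟨rfl, -⟩ | rfl | ⟨j, rfl, rfl⟩
    · omega
    · exact .inr (.inl (mul_zero _))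
    rw [e_mul_e (by omega) (by omega)]
    split_ifs with hij
    · obtain rfl : i = j := by omega
      exact .inr (.inr ⟨i + 1, by ring, rfl⟩)
    · exact .inr (.inl rfl)

theorem isWord_e (i : ℕ) : IsWord {e F m 1} (2 ^ i) (e F m (i + 1)) := by
  induction i with
  | zero => exact .base _ rfl
  | succ i ih =>
    have h := ih.mul (by positivity) (by positivity) ih
    rwa [e_mul_e (by omega) (by omega), if_pos rfl, ← two_mul, ← pow_succ'] at h

theorem lspan_e_one_eq_top : Lspan F {e F m 1} (2 ^ (m - 1)) = ⊤ := by
  refine top_le_iff.1 (span_range_e (F := F) ▸ Submodule.span_le.2 ?_)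
  rintro _ ⟨⟨i, hi⟩, rfl⟩
  rcases i with _ | i
  · exact lspan_mono_s12 (Nat.zero_le _) IsWord.one.mem_lspan
  · exact lspan_mono_s12 (Nat.pow_le_pow_right two_pos (by omega)) (isWord_e i).mem_lspan

theorem lspan_e_one_ne_top {k ℓ : ℕ} (hℓ : ℓ < 2 ^ k) : Lspan F {e F (k + 1) 1} ℓ ≠ ⊤ := by
  let lastCoord : Unitization F (SquareChain F (k + 1)) →ₗ[F] F :=
    { toFun x := x.snd (Fin.last k), map_add' _ _ := rfl, map_smul' _ _ := rfl }
  have hlast : lastCoord (e F (k + 1) (k + 1)) = 1 := by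
    show (single k : SquareChain F (k + 1)) (Fin.last k) = 1
    simp [single]
  have hle : Lspan F {e F (k + 1) 1} ℓ ≤ LinearMap.ker lastCoord := by
    refine Submodule.span_le.2 ?_
    rintro _ ⟨j, hj, hw⟩
    rcases isWord_e_one_cases hw with ⟨-, rfl⟩ | rfl | ⟨i, rfl, rfl⟩
    · exact LinearMap.mem_ker.2 (show (0 : SquareChain F (k + 1)) (Fin.last k) = 0 from rfl)
    · exact Submodule.zero_mem _
    · have hi : i < k := (Nat.pow_lt_pow_iff_right one_lt_two).1 (hj.trans_lt hℓ)
      refine LinearMap.mem_ker.2 (?_ : (single i : SquareChain F (k + 1)) (Fin.last k) = 0)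
      simp [single, hi.ne']
  intro htop
  have := hle (htop ▸ Submodule.mem_top : e F (k + 1) (k + 1) ∈ _)
  simp [hlast] at this

theorem generates_e_one : Generates F {e F m 1} :=
  top_unique (lspan_e_one_eq_top (F := F) (m := m) ▸ le_iSup (Lspan F {e F m 1}) _)

theorem len_e_one (k : ℕ) : len F {e F (k + 1) 1} = 2 ^ k :=
  le_antisymm (Nat.sInf_le lspan_e_one_eq_top)
    (le_csInf ⟨_, lspan_e_one_eq_top⟩ fun _ hb => not_lt.1 fun hlt => lspan_e_one_ne_top hlt hb)

end SquareChain

open SquareChain in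
theorem stmt_12 (F : Type) [Field F] (n : ℕ) (hn : 2 < n) :
    ∃ (Wit : AlgWitness F) (e : ℕ → Wit.carrier),
      Module.finrank F Wit.carrier = n ∧
      e 0 = 1 ∧
      LinearIndependent F (fun i : Fin n => e i.val) ∧
      Submodule.span F (Set.range (fun i : Fin n => e i.val)) = ⊤ ∧
      (∀ k, 1 ≤ k → k ≤ n - 2 → e k * e k = e (k + 1)) ∧
      e (n - 1) * e (n - 1) = 0 ∧
      (∀ p q, 1 ≤ p → p ≤ n - 1 → 1 ≤ q → q ≤ n - 1 → p ≠ q → e p * e q = 0) ∧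
      algLen F Wit.carrier = 2 ^ (n - 2) := by
  obtain ⟨k, rfl⟩ : ∃ k, n = k + 2 := ⟨n - 2, by omega⟩
  have hdim : Module.finrank F (Unitization F (SquareChain F (k + 1))) = k + 2 :=
    finrank_unitization
  refine ⟨⟨Unitization F (SquareChain F (k + 1))⟩, e F (k + 1), hdim, rfl, linearIndependent_e,
    span_range_e, fun i hi _ => ?_, ?_, fun p q hp _ hq _ hpq => ?_, ?_⟩
  · rw [e_mul_e hi hi, if_pos rfl]
  · rw [e_mul_e (by omega) (by omega), if_pos rfl, e_eq_zero_of_lt (by omega)]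
  · rw [e_mul_e hp hq, if_neg hpq]
  · have hlen : len F {e F (k + 1) 1} =
        2 ^ (Module.finrank F (Unitization F (SquareChain F (k + 1))) - 2) := by
      rw [hdim, len_e_one, Nat.add_sub_cancel]
    exact (algLen_eq_of_len_eq (Set.finite_singleton _) generates_e_one hlen).trans (by rw [hdim])
end

section
/- Let A be a locally-complex real algebra and S a finite subset, and let n ≥ 2 be an integer. If dim L_{n−1}(S) + 1 = dim L_n(S) and dim L_n(S) = dim L_{n+1}(S) = ... = dim L_{2n−1}(S), then dim L_{n+t}(S) = dim L_n(S) for all natural t. -/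
/-- A locally-complex algebra: a finite-dimensional unital real (not necessarily associative)
algebra that is quadratic (every `a` satisfies `a² = u•1 + v•a`) and has no nontrivial
idempotents and no nonzero square-zero elements. -/
def LocallyComplex (A : Type*) [NonAssocRing A] [Module ℝ A] [SMulCommClass ℝ A A]
    [IsScalarTower ℝ A A] : Prop :=
  FiniteDimensional ℝ A ∧
  (∀ a : A, ∃ u v : ℝ, a * a = u • (1 : A) + v • a) ∧
  (∀ a : A, a * a = a → a = 0 ∨ a = 1) ∧
  (∀ a : A, a * a = 0 → a = 0)

theorem stmt_13 (A : Type*) [NonAssocRing A] [Module ℝ A]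
    [SMulCommClass ℝ A A] [IsScalarTower ℝ A A] (hA : LocallyComplex A)
    (S : Set A) (hS : S.Finite) (n : ℕ) (hn : 2 ≤ n)
    (h1 : Module.finrank ℝ (Lspan ℝ S (n - 1)) + 1 = Module.finrank ℝ (Lspan ℝ S n))
    (h2 : ∀ i, n ≤ i → i ≤ 2 * n - 1 →
      Module.finrank ℝ (Lspan ℝ S i) = Module.finrank ℝ (Lspan ℝ S n)) :
    ∀ t : ℕ, Module.finrank ℝ (Lspan ℝ S (n + t)) = Module.finrank ℝ (Lspan ℝ S n) := by
  obtain ⟨hfd, hquad, -, -⟩ := hA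
  haveI := hfd
  have mono : ∀ {j k : ℕ}, j ≤ k → Lspan ℝ S j ≤ Lspan ℝ S k := by
    intro j k hjk
    apply Submodule.span_mono
    rintro a ⟨m, hm, hw⟩
    exact ⟨m, hm.trans hjk, hw⟩
  have wordmem : ∀ {m k : ℕ} {a : A}, IsWord S m a → m ≤ k → a ∈ Lspan ℝ S k :=
    fun h hm => Submodule.subset_span ⟨_, hm, h⟩
  have hle : ∀ i, i ≤ 2 * n - 1 → Lspan ℝ S i ≤ Lspan ℝ S n := by
    intro i hi
    rcases le_or_gt i n with h | h
    · exact mono h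
    · exact (Submodule.eq_of_le_of_finrank_le (mono h.le) (by rw [h2 i h.le hi])).ge
  have hne : ¬ ({a : A | ∃ m ≤ n, IsWord S m a} ⊆ (Lspan ℝ S (n - 1) : Set A)) := by
    intro hsub
    have h3 : Lspan ℝ S n ≤ Lspan ℝ S (n - 1) := Submodule.span_le.mpr hsub
    have := Submodule.finrank_mono h3
    omega
  obtain ⟨w, ⟨m, hmn, hw⟩, hwnot⟩ := Set.not_subset.mp hne
  have hwnot : w ∉ Lspan ℝ S (n - 1) := hwnot
  have hm : m = n := by
    by_contra hc
    exact hwnot (wordmem hw (by omega))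
  rw [hm] at hw
  have hsup : Lspan ℝ S (n - 1) ⊔ Submodule.span ℝ {w} = Lspan ℝ S n := by
    have hle' : Lspan ℝ S (n - 1) ⊔ Submodule.span ℝ {w} ≤ Lspan ℝ S n :=
      sup_le (mono (by omega))
        ((Submodule.span_singleton_le_iff_mem _ _).mpr (wordmem hw le_rfl))
    refine Submodule.eq_of_le_of_finrank_le hle' ?_
    have hlt : Lspan ℝ S (n - 1) < Lspan ℝ S (n - 1) ⊔ Submodule.span ℝ {w} := by
      refine lt_of_le_of_ne le_sup_left ?_
      intro he
      exact hwnot (he ▸ Submodule.mem_sup_right (Submodule.mem_span_singleton_self w))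
    have := Submodule.finrank_lt_finrank_of_lt hlt
    omega
  have hgen : Lspan ℝ S n
      = Submodule.span ℝ ({a : A | ∃ m ≤ n - 1, IsWord S m a} ∪ {w}) := by
    rw [Submodule.span_union]
    exact hsup.symm
  have word_zero : ∀ {k : ℕ} {a : A}, IsWord S k a → k = 0 → a = 1 := by
    intro k a h
    induction h with
    | one => intro _; rfl
    | base a ha => omega
    | mul hp hq _ _ _ _ => omega
  have hprod : ∀ {p q : ℕ} {a b : A}, IsWord S p a → IsWord S q b → p + q ≤ 2 * n - 1 →
      a * b ∈ Lspan ℝ S n := by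
    intro p q a b ha hb hpq
    rcases Nat.eq_zero_or_pos p with hp | hp
    · rw [word_zero ha hp, one_mul]; exact hle q (by omega) (wordmem hb le_rfl)
    rcases Nat.eq_zero_or_pos q with hq | hq
    · rw [word_zero hb hq, mul_one]; exact hle p (by omega) (wordmem ha le_rfl)
    exact hle (p + q) hpq (wordmem (IsWord.mul hp hq ha hb) le_rfl)
  have hmulG : ∀ a ∈ ({a : A | ∃ m ≤ n - 1, IsWord S m a} ∪ {w}),
      ∀ b ∈ ({a : A | ∃ m ≤ n - 1, IsWord S m a} ∪ {w}), a * b ∈ Lspan ℝ S n := by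
    rintro a (⟨p, hp, hpa⟩ | ha) b (⟨q, hq, hqb⟩ | hb)
    · exact hprod hpa hqb (by omega)
    · rw [show b = w from hb]
      exact hprod hpa hw (by omega)
    · rw [show a = w from ha]
      exact hprod hw hqb (by omega)
    · rw [show a = w from ha, show b = w from hb]
      obtain ⟨u, v, huv⟩ := hquad w
      rw [huv]
      exact add_mem (Submodule.smul_mem _ _ (wordmem IsWord.one (by omega)))
        (Submodule.smul_mem _ _ (wordmem hw le_rfl))
  have hclosed : ∀ a ∈ Lspan ℝ S n, ∀ b ∈ Lspan ℝ S n, a * b ∈ Lspan ℝ S n := by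
    intro a ha
    rw [hgen] at ha
    induction ha using Submodule.span_induction with
    | mem x hx =>
      intro b hb
      rw [hgen] at hb
      induction hb using Submodule.span_induction with
      | mem y hy => exact hmulG x hx y hy
      | zero => rw [mul_zero]; exact zero_mem _
      | add y z _ _ ihy ihz => rw [mul_add]; exact add_mem ihy ihz
      | smul r y _ ihy => rw [mul_smul_comm]; exact Submodule.smul_mem _ _ ihy
    | zero => intro b _; rw [zero_mul]; exact zero_mem _
    | add x y _ _ ihx ihy =>
      intro b hb
      rw [add_mul]; exact add_mem (ihx b hb) (ihy b hb)
    | smul r x _ ihx =>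
      intro b hb
      rw [smul_mul_assoc]; exact Submodule.smul_mem _ _ (ihx b hb)
  have hall : ∀ {k : ℕ} {a : A}, IsWord S k a → a ∈ Lspan ℝ S n := by
    intro k a h
    induction h with
    | one => exact wordmem IsWord.one (by omega)
    | base a ha => exact wordmem (IsWord.base a ha) (by omega)
    | mul hp hq ha hb iha ihb => exact hclosed _ iha _ ihb
  intro t
  have heq : Lspan ℝ S (n + t) = Lspan ℝ S n := by
    refine le_antisymm ?_ (mono (by omega))
    exact Submodule.span_le.mpr (fun a ⟨m, _, hwd⟩ => hall hwd)
  rw [heq]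
end

section
/- Let S be a finite generating set of a locally-complex algebra A and n ≥ 2 an integer. If dim L_{n−1}(S) < dim L_n(S) and dim L_{n−1}(S) ≤ dim A − 2, then dim L_{n−1}(S) ≤ dim L_{2n−1}(S) − 2. -/
section Aux
variable {A : Type*} [NonAssocRing A] [Module ℝ A] [SMulCommClass ℝ A A]
  [IsScalarTower ℝ A A] {S : Set A}

lemma isWord_zero' {m : ℕ} {a : A} (h : IsWord S m a) (hm : m = 0) : a = 1 := by
  induction h with
  | one => rfl
  | base a ha => omega
  | mul h0 h1 _ _ _ _ => omega

lemma isWord_zero_s14 {a : A} (h : IsWord S 0 a) : a = 1 := isWord_zero' h rfl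

lemma isWord_mem_Lspan {m k : ℕ} {a : A} (h : IsWord S m a) (hm : m ≤ k) :
    a ∈ Lspan ℝ S k := Submodule.subset_span ⟨m, hm, h⟩

lemma Lspan_mono_s14 {i j : ℕ} (h : i ≤ j) : Lspan ℝ S i ≤ Lspan ℝ S j :=
  Submodule.span_mono fun _ ⟨m, hm, hw⟩ => ⟨m, hm.trans h, hw⟩

lemma word_mul_mem_s14 {p q i j : ℕ} {a b : A} (hp : p ≤ i) (hq : q ≤ j)
    (ha : IsWord S p a) (hb : IsWord S q b) : a * b ∈ Lspan ℝ S (i + j) := by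
  rcases Nat.eq_zero_or_pos p with h0 | h0
  · subst h0
    rw [isWord_zero_s14 ha, one_mul]
    exact isWord_mem_Lspan hb (hq.trans (Nat.le_add_left _ _))
  rcases Nat.eq_zero_or_pos q with h1 | h1
  · subst h1
    rw [isWord_zero_s14 hb, mul_one]
    exact isWord_mem_Lspan ha (hp.trans (Nat.le_add_right _ _))
  exact isWord_mem_Lspan (IsWord.mul h0 h1 ha hb) (Nat.add_le_add hp hq)

lemma Lspan_mul_mem {i j : ℕ} {a b : A} (ha : a ∈ Lspan ℝ S i) (hb : b ∈ Lspan ℝ S j) :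
    a * b ∈ Lspan ℝ S (i + j) := by
  induction ha using Submodule.span_induction with
  | mem x hx =>
    obtain ⟨p, hp, hw⟩ := hx
    induction hb using Submodule.span_induction with
    | mem y hy =>
      obtain ⟨q, hq, hw'⟩ := hy
      exact word_mul_mem_s14 hp hq hw hw'
    | zero => rw [mul_zero]; exact Submodule.zero_mem _
    | add y z _ _ h1 h2 => rw [mul_add]; exact Submodule.add_mem _ h1 h2
    | smul c y _ h1 => rw [mul_smul_comm]; exact Submodule.smul_mem _ _ h1
  | zero => rw [zero_mul]; exact Submodule.zero_mem _
  | add x y _ _ h1 h2 => rw [add_mul]; exact Submodule.add_mem _ h1 h2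
  | smul c x _ h1 => rw [smul_mul_assoc]; exact Submodule.smul_mem _ _ h1

end Aux

theorem stmt_14 (A : Type*) [NonAssocRing A] [Module ℝ A]
    [SMulCommClass ℝ A A] [IsScalarTower ℝ A A] (hA : LocallyComplex A)
    (S : Set A) (hS : S.Finite) (hgen : Generates ℝ S) (n : ℕ) (hn : 2 ≤ n)
    (h1 : Module.finrank ℝ (Lspan ℝ S (n - 1)) < Module.finrank ℝ (Lspan ℝ S n))
    (h2 : Module.finrank ℝ (Lspan ℝ S (n - 1)) + 2 ≤ Module.finrank ℝ A) :
    Module.finrank ℝ (Lspan ℝ S (n - 1)) + 2 ≤ Module.finrank ℝ (Lspan ℝ S (2 * n - 1)) := by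
  obtain ⟨hfd, hquad, -, -⟩ := hA
  haveI := hfd
  by_cases hcase : Module.finrank ℝ (Lspan ℝ S (n - 1)) + 2 ≤ Module.finrank ℝ (Lspan ℝ S n)
  · exact hcase.trans (Submodule.finrank_mono (Lspan_mono_s14 (by omega)))
  have hn1 : Module.finrank ℝ (Lspan ℝ S n) = Module.finrank ℝ (Lspan ℝ S (n - 1)) + 1 := by
    omega
  have hlt : Lspan ℝ S (n - 1) < Lspan ℝ S n :=
    lt_of_le_of_ne (Lspan_mono_s14 (by omega)) (fun h => by rw [h] at h1; omega)
  obtain ⟨w, hwn, hwn1⟩ := SetLike.exists_of_lt hlt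
  have hsup : Lspan ℝ S (n - 1) ⊔ Submodule.span ℝ {w} = Lspan ℝ S n := by
    apply Submodule.eq_of_le_of_finrank_le
      (sup_le hlt.le (Submodule.span_le.2 (Set.singleton_subset_iff.2 hwn)))
    rw [hn1]
    have hlt2 : Lspan ℝ S (n - 1) < Lspan ℝ S (n - 1) ⊔ Submodule.span ℝ {w} :=
      lt_of_le_of_ne le_sup_left (fun h => hwn1
        (h ▸ Submodule.mem_sup_right (Submodule.mem_span_singleton_self w)))
    have := Submodule.finrank_lt_finrank_of_lt hlt2
    omega
  by_contra hcon
  have hEq : Lspan ℝ S n = Lspan ℝ S (2 * n - 1) := by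
    apply Submodule.eq_of_le_of_finrank_le (Lspan_mono_s14 (by omega))
    have h3 : Module.finrank ℝ (Lspan ℝ S n) ≤ Module.finrank ℝ (Lspan ℝ S (2 * n - 1)) :=
      Submodule.finrank_mono (Lspan_mono_s14 (by omega))
    omega
  have hw2 : w * w ∈ Lspan ℝ S n := by
    obtain ⟨u, v, huv⟩ := hquad w
    rw [huv]
    exact Submodule.add_mem _
      (Submodule.smul_mem _ _ (isWord_mem_Lspan IsWord.one (Nat.zero_le n)))
      (Submodule.smul_mem _ _ hwn)
  have hclosed : ∀ x ∈ Lspan ℝ S n, ∀ y ∈ Lspan ℝ S n, x * y ∈ Lspan ℝ S n := by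
    intro x hx y hy
    rw [← hsup] at hx hy
    obtain ⟨x', hx', zx, hzx, hxe⟩ := Submodule.mem_sup.1 hx
    obtain ⟨y', hy', zy, hzy, hye⟩ := Submodule.mem_sup.1 hy
    obtain ⟨α, hα⟩ := Submodule.mem_span_singleton.1 hzx
    obtain ⟨β, hβ⟩ := Submodule.mem_span_singleton.1 hzy
    have hxy : x * y = x' * y' + β • (x' * w) + α • (w * y') + α • β • (w * w) := by
      rw [← hxe, ← hye, ← hα, ← hβ]
      simp only [add_mul, mul_add, smul_mul_assoc, mul_smul_comm]
      module
    rw [hxy]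
    have hmem1 : x' * y' ∈ Lspan ℝ S n := by
      rw [hEq]
      exact Lspan_mono_s14 (by omega) (Lspan_mul_mem hx' hy')
    have hmem2 : x' * w ∈ Lspan ℝ S n := by
      rw [hEq]
      exact Lspan_mono_s14 (by omega) (Lspan_mul_mem hx' hwn)
    have hmem3 : w * y' ∈ Lspan ℝ S n := by
      rw [hEq]
      exact Lspan_mono_s14 (by omega) (Lspan_mul_mem hwn hy')
    exact Submodule.add_mem _ (Submodule.add_mem _ (Submodule.add_mem _ hmem1
      (Submodule.smul_mem _ _ hmem2)) (Submodule.smul_mem _ _ hmem3))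
      (Submodule.smul_mem _ _ (Submodule.smul_mem _ _ hw2))
  have hword : ∀ {t : ℕ} {a : A}, IsWord S t a → a ∈ Lspan ℝ S n := by
    intro t a h
    induction h with
    | one => exact isWord_mem_Lspan IsWord.one (Nat.zero_le n)
    | base a ha => exact isWord_mem_Lspan (IsWord.base a ha) (by omega)
    | mul _ _ _ _ iha ihb => exact hclosed _ iha _ ihb
  have htop : Lspan ℝ S n = ⊤ := by
    rw [eq_top_iff, ← hgen]
    exact iSup_le fun k => Submodule.span_le.2 fun a ⟨m, _, hwd⟩ => hword hwd
  have hfr : Module.finrank ℝ (Lspan ℝ S n) = Module.finrank ℝ A := by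
    rw [htop]; exact finrank_top ℝ A
  omega
end

section
/- Let (m_0, m_1, ..., m_{n−1}) be a sequence of non-negative integers with m_0 = 0, m_1 = 1, such that for each h with m_h ≥ 2 there are indices 0 < t₁ < t₂ < h with m_h = m_{t₁} + m_{t₂}. Then m_h ≤ F_h for every 1 ≤ h ≤ n−1, where F denotes the Fibonacci sequence with F_1 = F_2 = 1. -/
theorem stmt_16 (n : ℕ) (m : ℕ → ℕ) (h0 : m 0 = 0) (h1 : m 1 = 1)
    (hchain : ∀ h, h ≤ n - 1 → 2 ≤ m h →
      ∃ t₁ t₂, 0 < t₁ ∧ t₁ < t₂ ∧ t₂ < h ∧ m h = m t₁ + m t₂) :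
    ∀ h, 1 ≤ h → h ≤ n - 1 → m h ≤ Nat.fib h := by
  intro h
  induction h using Nat.strong_induction_on with
  | _ h ih =>
    intro h1h hle
    by_cases hm : 2 ≤ m h
    · obtain ⟨t₁, t₂, ht1, ht12, ht2, heq⟩ := hchain h hle hm
      have hfib1 : m t₁ ≤ Nat.fib t₁ :=
        ih t₁ (lt_trans ht12 ht2) ht1 (le_trans (le_of_lt (lt_trans ht12 ht2)) hle)
      have hfib2 : m t₂ ≤ Nat.fib t₂ :=
        ih t₂ ht2 (by omega) (le_trans ht2.le hle)
      have ht2ge : 1 ≤ t₂ := by omega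
      calc m h = m t₁ + m t₂ := heq
        _ ≤ Nat.fib t₁ + Nat.fib t₂ := Nat.add_le_add hfib1 hfib2
        _ ≤ Nat.fib (t₂ - 1) + Nat.fib t₂ :=
            Nat.add_le_add_right (Nat.fib_mono (by omega)) _
        _ = Nat.fib (t₂ + 1) := by
            obtain ⟨k, rfl⟩ : ∃ k, t₂ = k + 1 := ⟨t₂ - 1, by omega⟩
            simp [Nat.fib_add_two]
        _ ≤ Nat.fib h := Nat.fib_mono (by omega)
    · have : m h ≤ 1 := by omega
      calc m h ≤ 1 := this
        _ ≤ Nat.fib h := Nat.fib_pos.mpr (by omega)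
end
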